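/- Let (A, μ, α) be a Hom-associative algebra over a field k of characteristic 0. Define the triple product [x,y,z] = (xy)α(z) − (yx)α(z) − (zx)α(y) + (zy)α(x) (juxtaposition denotes μ). Then A_L = (A, [·,·,·], α²) with both twisting maps equal to α² is a Hom-Lie triple system; and if A is multiplicative, then so is A_L. -/
import Mathlib


/-- The triple product `[x,y,z] = (xy)α(z) − (yx)α(z) − (zx)α(y) + (zy)α(x)`
on a Hom-algebra `(A, mul, α)`. -/
def homAssocLieTriple {k A : Type*} [Field k] [AddCommGroup A] [Module k A]
    (mul : A →ₗ[k] A →ₗ[k] A) (α : A →ₗ[k] A) (x y z : A) : A :=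
  mul (mul x y) (α z) - mul (mul y x) (α z) - mul (mul z x) (α y)
    + mul (mul z y) (α x)

/-- If `(A, μ, α)` is a Hom-associative algebra, then
`A_L = (A, [·,·,·], α²)` with
`[x,y,z] = (xy)α(z) − (yx)α(z) − (zx)α(y) + (zy)α(x)` is a Hom-Lie triple
system; and if `A` is multiplicative, then so is `A_L`. -/
theorem homAssociative_gives_homLie_triple_system
    {k A : Type*} [Field k] [CharZero k] [AddCommGroup A] [Module k A]
    (mul : A →ₗ[k] A →ₗ[k] A) (α : A →ₗ[k] A)
    (hassoc : ∀ x y z : A, mul (mul x y) (α z) = mul (α x) (mul y z)) :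
    -- left anti-symmetry
    (∀ u v w : A,
      homAssocLieTriple mul α u v w = - homAssocLieTriple mul α v u w) ∧
    -- the ternary Jacobi identity
    (∀ u v w : A,
      homAssocLieTriple mul α u v w + homAssocLieTriple mul α w u v
        + homAssocLieTriple mul α v w u = 0) ∧
    -- the ternary Hom-Nambu identity with both twisting maps equal to α²
    (∀ u v w x y : A,
      homAssocLieTriple mul α (α (α x)) (α (α y)) (homAssocLieTriple mul α u v w)
        = homAssocLieTriple mul α (homAssocLieTriple mul α x y u) (α (α v)) (α (α w))
          + homAssocLieTriple mul α (α (α u)) (homAssocLieTriple mul α x y v) (α (α w))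
          + homAssocLieTriple mul α (α (α u)) (α (α v)) (homAssocLieTriple mul α x y w)) ∧
    -- if A is multiplicative, then so is A_L
    ((∀ x y : A, α (mul x y) = mul (α x) (α y)) →
      ∀ x y z : A,
        α (α (homAssocLieTriple mul α x y z))
          = homAssocLieTriple mul α (α (α x)) (α (α y)) (α (α z))) := by
  have R2 : ∀ a b c d : A,
      mul (α (mul a b)) (mul (α c) d)
        = mul (α (α a)) (mul (mul b c) d) := by
    intro a b c d
    rw [← hassoc (mul a b) (α c) d, hassoc a b c, hassoc (α a) (mul b c) d]
  refine ⟨?_, ?_, ?_, ?_⟩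
  · intro u v w
    simp only [homAssocLieTriple]
    abel
  · intro u v w
    simp only [homAssocLieTriple]
    abel
  · intro u v w x y
    simp only [homAssocLieTriple, map_sub, map_add, LinearMap.sub_apply,
      LinearMap.add_apply, hassoc, R2]
    abel
  · intro hmul x y z
    simp only [homAssocLieTriple, map_sub, map_add, LinearMap.sub_apply,
      LinearMap.add_apply, hmul]
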